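/- arXiv:2010.13591 — 2 statements merged into one kernel-verified Lean document; each statement's English description precedes it below -/
import Mathlib

section
/- Let f, g : [a, b] → ℝ be twice continuously differentiable, and let a ≤ p < q ≤ b with g(p) = f(p) and g(q) = f(q). Then for every x ∈ [p, q], |g(x) − f(x)| ≤ (∫_a^b (g''(v) − f''(v))² dv)^{1/2} · (q − p)^{3/2}. -/
/-! Rolle's theorem gives a zero `c ∈ (p, q)` of `(g - f)'`. Writing `(g - f)'(y)` as
`∫_c^y (g'' - f'')` and applying Cauchy–Schwarz bounds `|(g - f)'|` on `[p, q]` by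
`√((q - p) ∫_a^b (g'' - f'')²)`; since `g p = f p`, the mean value inequality contributes
another factor `q - p`. -/

open Set intervalIntegral MeasureTheory

theorem integral_eq_sub_of_hasDerivWithinAt_of_uIcc_subset {E : Type*} [NormedAddCommGroup E]
    [NormedSpace ℝ E] [CompleteSpace E] {f f' : ℝ → E} {s : Set ℝ} {a b : ℝ}
    (hs : uIcc a b ⊆ s) (hderiv : ∀ x ∈ uIcc a b, HasDerivWithinAt f (f' x) s x)
    (hint : IntervalIntegrable f' volume a b) : ∫ y in a..b, f' y = f b - f a :=
  integral_eq_sub_of_hasDeriv_right (fun x hx => (hderiv x hx).continuousWithinAt.mono hs)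
    (fun x hx => ((hderiv x (Ioo_subset_Icc_self hx)).hasDerivAt
      (Filter.mem_of_superset (Ioo_mem_nhds hx.1 hx.2)
        (Ioo_subset_Icc_self.trans hs))).hasDerivWithinAt)
    hint

theorem exists_hasDerivWithinAt_eq_zero_of_Icc_subset {f f' : ℝ → ℝ} {s : Set ℝ} {a b : ℝ}
    (hab : a < b) (hs : Icc a b ⊆ s) (hderiv : ∀ x ∈ Icc a b, HasDerivWithinAt f (f' x) s x)
    (hfab : f a = f b) : ∃ c ∈ Ioo a b, f' c = 0 :=
  exists_hasDerivAt_eq_zero hab (fun x hx => (hderiv x hx).continuousWithinAt.mono hs) hfab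
    (fun x hx => (hderiv x (Ioo_subset_Icc_self hx)).hasDerivAt
      (Filter.mem_of_superset (Ioo_mem_nhds hx.1 hx.2) (Ioo_subset_Icc_self.trans hs)))

theorem sq_integral_le_measureReal_univ_mul_integral_sq {α : Type*} [MeasurableSpace α]
    {μ : Measure α} [IsFiniteMeasure μ] {H : α → ℝ} (hH : Integrable H μ)
    (hH2 : Integrable (fun x => H x ^ 2) μ) :
    (∫ x, H x ∂μ) ^ 2 ≤ μ.real univ * ∫ x, H x ^ 2 ∂μ := by
  set L := μ.real univ
  set S := ∫ x, H x ∂μ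
  set Q := ∫ x, H x ^ 2 ∂μ
  have hexpand : ∫ x, (L * H x - S) ^ 2 ∂μ = L * (L * Q - S ^ 2) := by
    have hpoly : (fun x => (L * H x - S) ^ 2)
        = fun x => L ^ 2 * H x ^ 2 - 2 * L * S * H x + S ^ 2 := by
      funext x; ring
    have hlin : Integrable (fun x => L ^ 2 * H x ^ 2 - 2 * L * S * H x) μ :=
      (hH2.const_mul _).sub (hH.const_mul _)
    rw [hpoly, MeasureTheory.integral_add hlin (integrable_const _),
      MeasureTheory.integral_sub (hH2.const_mul _) (hH.const_mul _),
      MeasureTheory.integral_const_mul, MeasureTheory.integral_const_mul,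
      MeasureTheory.integral_const, smul_eq_mul]
    ring
  have hnonneg : 0 ≤ L * (L * Q - S ^ 2) := hexpand ▸ integral_nonneg fun x => sq_nonneg _
  rcases (measureReal_nonneg : 0 ≤ L).eq_or_lt with hL | hL
  · have hμ : μ = 0 := by
      rw [← Measure.measure_univ_eq_zero]
      simpa [L, measureReal_def, ENNReal.toReal_eq_zero_iff, measure_ne_top] using hL.symm
    simp [S, L, hμ]
  · nlinarith [(mul_nonneg_iff_of_pos_left hL).1 hnonneg]

theorem sq_intervalIntegral_le_abs_sub_mul_integral_sq {H : ℝ → ℝ} {a b c d : ℝ}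
    (hcd : uIcc c d ⊆ Icc a b) (hH : ContinuousOn H (Icc a b)) :
    (∫ u in c..d, H u) ^ 2 ≤ |d - c| * ∫ u in a..b, H u ^ 2 := by
  have hab : a ≤ b := (nonempty_uIcc.mono hcd).elim fun _ hx => hx.1.trans hx.2
  have hsub : uIoc c d ⊆ Icc a b := uIoc_subset_uIcc.trans hcd
  have hint : IntegrableOn H (Icc a b) := hH.integrableOn_Icc
  have hint2 : IntegrableOn (fun u => H u ^ 2) (Icc a b) := (hH.pow 2).integrableOn_Icc
  have : IsFiniteMeasure (volume.restrict (uIoc c d)) := Real.isFiniteMeasure_restrict_Ioc _ _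
  rw [← sq_abs, abs_integral_eq_abs_integral_uIoc, sq_abs]
  calc (∫ u in uIoc c d, H u) ^ 2
      ≤ (volume.restrict (uIoc c d)).real univ * ∫ u in uIoc c d, H u ^ 2 :=
        sq_integral_le_measureReal_univ_mul_integral_sq (hint.mono_set hsub)
          (hint2.mono_set hsub)
    _ = |d - c| * ∫ u in uIoc c d, H u ^ 2 := by
        rw [measureReal_restrict_apply_univ, measureReal_def, Real.volume_uIoc,
          ENNReal.toReal_ofReal (abs_nonneg _)]
    _ ≤ |d - c| * ∫ u in Icc a b, H u ^ 2 :=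
        mul_le_mul_of_nonneg_left (setIntegral_mono_set hint2
          (Filter.Eventually.of_forall fun _ => sq_nonneg _) hsub.eventuallyLE) (abs_nonneg _)
    _ = |d - c| * ∫ u in a..b, H u ^ 2 := by
        rw [integral_of_le hab, integral_Icc_eq_integral_Ioc]

theorem abs_le_sqrt_mul_integral_sq_of_eq_zero {ψ H : ℝ → ℝ} {a b c y : ℝ}
    (hderiv : ∀ x ∈ Icc a b, HasDerivWithinAt ψ (H x) (Icc a b) x)
    (hH : ContinuousOn H (Icc a b)) (hc : c ∈ Icc a b) (hy : y ∈ Icc a b) (hψc : ψ c = 0) :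
    |ψ y| ≤ √(|y - c| * ∫ u in a..b, H u ^ 2) := by
  have hcy : uIcc c y ⊆ Icc a b := uIcc_subset_Icc hc hy
  have hftc : ∫ u in c..y, H u = ψ y - ψ c :=
    integral_eq_sub_of_hasDerivWithinAt_of_uIcc_subset hcy (fun x hx => hderiv x (hcy hx))
      (hH.mono hcy).intervalIntegrable
  refine Real.abs_le_sqrt ?_
  rw [← sub_zero (ψ y), ← hψc, ← hftc]
  exact sq_intervalIntegral_le_abs_sub_mul_integral_sq hcy hH

/-- Equations (int1)–(int2) of the paper: if `f, g` are twice continuously differentiable on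
`[a,b]` and agree at `p < q` in `[a,b]`, then for all `x ∈ [p,q]`,
`|g(x) − f(x)| ≤ (∫_a^b (g''−f'')²)^{1/2} (q−p)^{3/2}`. -/
theorem function_diff_bound_of_interpolation
    (a b p q : ℝ) (f f' f'' g g' g'' : ℝ → ℝ)
    (hap : a ≤ p) (hpq : p < q) (hqb : q ≤ b)
    (hfd : ∀ x ∈ Icc a b, HasDerivWithinAt f (f' x) (Icc a b) x)
    (hfd2 : ∀ x ∈ Icc a b, HasDerivWithinAt f' (f'' x) (Icc a b) x)
    (hfc : ContinuousOn f'' (Icc a b))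
    (hgd : ∀ x ∈ Icc a b, HasDerivWithinAt g (g' x) (Icc a b) x)
    (hgd2 : ∀ x ∈ Icc a b, HasDerivWithinAt g' (g'' x) (Icc a b) x)
    (hgc : ContinuousOn g'' (Icc a b))
    (hp : g p = f p) (hq : g q = f q) :
    ∀ x ∈ Icc p q,
      |g x - f x| ≤
        Real.sqrt (∫ v in a..b, (g'' v - f'' v) ^ 2) * (q - p) ^ ((3 : ℝ) / 2) := by
  intro x hx
  have hsub : Icc p q ⊆ Icc a b := Icc_subset_Icc hap hqb
  have hdiff : ∀ y ∈ Icc a b, HasDerivWithinAt (fun y => g y - f y) (g' y - f' y) (Icc a b) y :=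
    fun y hy => (hgd y hy).sub (hfd y hy)
  have hdiff' : ∀ y ∈ Icc a b,
      HasDerivWithinAt (fun y => g' y - f' y) (g'' y - f'' y) (Icc a b) y :=
    fun y hy => (hgd2 y hy).sub (hfd2 y hy)
  obtain ⟨c, hc, hc0⟩ := exists_hasDerivWithinAt_eq_zero_of_Icc_subset hpq hsub
    (fun y hy => hdiff y (hsub hy)) (by simp [hp, hq])
  set I := ∫ v in a..b, (g'' v - f'' v) ^ 2
  have hslope : ∀ y ∈ Ico p q, ‖g' y - f' y‖ ≤ √((q - p) * I) := by
    intro y hy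
    have hyc : |y - c| ≤ q - p :=
      abs_sub_le_iff.2 ⟨by linarith [hc.1, hy.2], by linarith [hc.2, hy.1]⟩
    calc ‖g' y - f' y‖ ≤ √(|y - c| * I) :=
          abs_le_sqrt_mul_integral_sq_of_eq_zero hdiff' (hgc.sub hfc)
            (hsub (Ioo_subset_Icc_self hc)) (hsub (Ico_subset_Icc_self hy)) hc0
      _ ≤ √((q - p) * I) := by
          gcongr
          exact integral_nonneg (hap.trans (hpq.le.trans hqb)) fun _ _ => sq_nonneg _
  have hmvt := norm_image_sub_le_of_norm_deriv_le_segment'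
    (fun y hy => (hdiff y (hsub hy)).mono hsub) hslope x hx
  calc |g x - f x| ≤ √((q - p) * I) * (x - p) := by simpa [hp] using hmvt
    _ ≤ √((q - p) * I) * (q - p) := by gcongr; exact hx.2
    _ = √I * (q - p) ^ ((3 : ℝ) / 2) := by
      rw [show (3 : ℝ) / 2 = 1 / 2 + 1 by norm_num, Real.rpow_add (sub_pos.2 hpq),
        Real.rpow_one, ← Real.sqrt_eq_rpow, Real.sqrt_mul (sub_pos.2 hpq).le]
      ring
end

section
/- Let X = ∏_{i=1}^d [a_i, b_i] with a_i < b_i for each i. For each i ∈ {1,…,d}, let a_i = x_{1i} < x_{2i} < ⋯ < x_{ñ_i i} = b_i be grid points of [a_i, b_i], let h_i = max_{1≤j≤ñ_i−1} (x_{(j+1)i} − x_{ji}), and let h = max_{1≤i≤d} h_i. Let f, g : X → ℝ be twice continuously differentiable with all second-order partial derivatives bounded in absolute value by M > 0 on X, and suppose g(x) = f(x) for every x ∈ X having at least one coordinate x_i equal to a grid point x_{ji}. Then sup_{x ∈ X} ‖∇g(x) − ∇f(x)‖ ≤ 2M (∑_{i=1}^d (b_i − a_i))^{1/2} · √h, where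 ∇ denotes the gradient and ‖·‖ the Euclidean norm on ℝ^d. -/
/-!
Fix a coordinate `i` and put `φ = g - f`. On the line through `x` parallel to the `i`-th axis,
`φ` vanishes at the two consecutive grid points `p < q` enclosing `x i`, so by Rolle `∂ᵢφ` has a
zero `ξ ∈ (p, q)` there. Since `|∂ᵢ∂ᵢφ| ≤ 2M`, the mean value theorem gives
`|∂ᵢφ x| ≤ 2M |x i - ξ| ≤ 2M (q - p)`, and `(q - p)² ≤ h (bᵢ - aᵢ)`. Summing over `i` gives the
bound.
-/

open Set

theorem Fin.exists_consecutive_mem_Icc {α : Type*} [LinearOrder α] {n : ℕ} (u : Fin n → α)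
    {t : α} (j₀ j₁ : Fin n) (hj : j₀ < j₁) (h₀ : u j₀ ≤ t) (h₁ : t ≤ u j₁) :
    ∃ j k : Fin n, (k : ℕ) = j + 1 ∧ j₀ ≤ j ∧ k ≤ j₁ ∧ t ∈ Icc (u j) (u k) := by
  obtain ⟨q, hq⟩ := j₁
  change (j₀ : ℕ) < q at hj
  induction q with
  | zero => omega
  | succ q ih =>
    set j : Fin n := ⟨q, by omega⟩
    by_cases hqt : u j ≤ t
    · exact ⟨j, _, rfl, Fin.le_def.2 (Nat.lt_succ_iff.1 hj), le_rfl, hqt, h₁⟩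
    · have hj' : (j₀ : ℕ) < q := by
        refine (Nat.lt_succ_iff.1 hj).lt_of_ne fun h => hqt ?_
        rwa [show j = j₀ from Fin.ext h.symm]
      obtain ⟨j', k', hk', h₀j', hk'j, ht⟩ := ih (by omega) (not_le.1 hqt).le hj'
      exact ⟨j', k', hk', h₀j', hk'j.trans (Fin.le_def.2 (Nat.le_succ q)), ht⟩

theorem abs_le_mul_sub_of_hasDerivWithinAt_of_eq {ψ D D' : ℝ → ℝ} {p q K t : ℝ} (hpq : p < q)
    (hψ : ∀ s ∈ Icc p q, HasDerivWithinAt ψ (D s) (Icc p q) s)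
    (hD : ∀ s ∈ Icc p q, HasDerivWithinAt D (D' s) (Icc p q) s)
    (hD' : ∀ s ∈ Icc p q, |D' s| ≤ K) (hψpq : ψ p = ψ q) (ht : t ∈ Icc p q) :
    |D t| ≤ K * (q - p) := by
  obtain ⟨ξ, hξ, hDξ⟩ := exists_hasDerivAt_eq_zero hpq
    (fun s hs => (hψ s hs).continuousWithinAt) hψpq
    (fun s hs => (hψ s (Ioo_subset_Icc_self hs)).hasDerivAt (Icc_mem_nhds hs.1 hs.2))
  have hlip := (convex_Icc p q).norm_image_sub_le_of_norm_hasDerivWithin_le hD hD'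
    (Ioo_subset_Icc_self hξ) ht
  rw [hDξ, sub_zero, Real.norm_eq_abs, Real.norm_eq_abs] at hlip
  calc |D t| ≤ K * |t - ξ| := hlip
    _ ≤ K * (q - p) := by
      have hK : 0 ≤ K := (abs_nonneg _).trans (hD' t ht)
      gcongr
      exact abs_sub_le_iff.2 ⟨by linarith [ht.2, hξ.1], by linarith [ht.1, hξ.2]⟩

section SecondDerivatives

variable {E F : Type*} [NormedAddCommGroup E] [NormedSpace ℝ E] [NormedAddCommGroup F]
  [NormedSpace ℝ F]

theorem DifferentiableOn.hasDerivWithinAt_comp_add_smul {φ : E → F} {s : Set E}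
    (hφ : DifferentiableOn ℝ φ s) {y v : E} {S : Set ℝ} (hS : MapsTo (fun t => y + t • v) S s)
    {t : ℝ} (ht : t ∈ S) :
    HasDerivWithinAt (fun t => φ (y + t • v)) (fderivWithin ℝ φ s (y + t • v) v) S t := by
  have hline : HasDerivAt (fun t : ℝ => y + t • v) v t := by
    simpa using ((hasDerivAt_id t).smul_const v).const_add y
  exact (hφ _ (hS ht)).hasFDerivWithinAt.comp_hasDerivWithinAt t hline.hasDerivWithinAt hS

theorem ContDiffOn.differentiableOn_fderivWithin_apply {φ : E → F} {s : Set E}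
    (hs : UniqueDiffOn ℝ s) (hφ : ContDiffOn ℝ 2 φ s) (v : E) :
    DifferentiableOn ℝ (fun z => fderivWithin ℝ φ s z v) s :=
  ((hφ.fderivWithin hs (by norm_num : (1 : WithTop ℕ∞) + 1 ≤ 2)).differentiableOn
    one_ne_zero).clm_apply (differentiableOn_const v)

theorem fderivWithin_fderivWithin_apply_sub {f g : E → F} {s : Set E} (hs : UniqueDiffOn ℝ s)
    (hf : ContDiffOn ℝ 2 f s) (hg : ContDiffOn ℝ 2 g s) {x : E} (hx : x ∈ s) (v w : E) :
    fderivWithin ℝ (fun z => fderivWithin ℝ (fun y => g y - f y) s z v) s x w =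
      fderivWithin ℝ (fun z => fderivWithin ℝ g s z v) s x w -
        fderivWithin ℝ (fun z => fderivWithin ℝ f s z v) s x w := by
  have hfirst : EqOn (fun z => fderivWithin ℝ (fun y => g y - f y) s z v)
      (fun z => fderivWithin ℝ g s z v - fderivWithin ℝ f s z v) s := fun z hz => by
    dsimp only
    rw [fderivWithin_fun_sub (hs z hz) (hg.differentiableOn two_ne_zero z hz)
      (hf.differentiableOn two_ne_zero z hz)]
    rfl
  rw [fderivWithin_congr' hfirst hx, fderivWithin_fun_sub (hs x hx)
    (hg.differentiableOn_fderivWithin_apply hs v x hx)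
    (hf.differentiableOn_fderivWithin_apply hs v x hx)]
  rfl

theorem ContDiffOn.abs_fderivWithin_apply_le_of_eq {φ : E → ℝ} {s : Set E}
    (hs : UniqueDiffOn ℝ s) (hφ : ContDiffOn ℝ 2 φ s) {y v : E} {p q K t : ℝ} (hpq : p < q)
    (hline : MapsTo (fun t => y + t • v) (Icc p q) s)
    (hK : ∀ t ∈ Icc p q, |fderivWithin ℝ (fun z => fderivWithin ℝ φ s z v) s (y + t • v) v| ≤ K)
    (hφpq : φ (y + p • v) = φ (y + q • v)) (ht : t ∈ Icc p q) :
    |fderivWithin ℝ φ s (y + t • v) v| ≤ K * (q - p) :=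
  abs_le_mul_sub_of_hasDerivWithinAt_of_eq hpq
    (fun _ => (hφ.differentiableOn two_ne_zero).hasDerivWithinAt_comp_add_smul hline)
    (fun _ => (hφ.differentiableOn_fderivWithin_apply hs v).hasDerivWithinAt_comp_add_smul hline)
    hK hφpq ht

end SecondDerivatives

section Box

variable {ι : Type*} [Fintype ι]

def euclideanBox (a b : ι → ℝ) : Set (EuclideanSpace ℝ ι) :=
  {x | ∀ i, x i ∈ Icc (a i) (b i)}

theorem uniqueDiffOn_euclideanBox {a b : ι → ℝ} (hab : ∀ i, a i < b i) :
    UniqueDiffOn ℝ (euclideanBox a b) := by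
  have hbox : euclideanBox a b =
      PiLp.continuousLinearEquiv 2 ℝ (fun _ : ι => ℝ) ⁻¹' univ.pi fun i => Icc (a i) (b i) := by
    ext x
    simp only [euclideanBox, mem_ofPred_eq, mem_preimage, mem_univ_pi]
    rfl
  rw [hbox, ContinuousLinearEquiv.uniqueDiffOn_preimage_iff]
  exact UniqueDiffOn.univ_pi fun i => uniqueDiffOn_Icc (hab i)

variable [DecidableEq ι] {a b : ι → ℝ} {φ : EuclideanSpace ℝ ι → ℝ} {K : ℝ}

theorem abs_fderivWithin_single_le_of_eq_zero_on_slices (hab : ∀ i, a i < b i)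
    (hφ : ContDiffOn ℝ 2 φ (euclideanBox a b)) (i : ι)
    (hK : ∀ y ∈ euclideanBox a b, |fderivWithin ℝ
      (fun z => fderivWithin ℝ φ (euclideanBox a b) z (EuclideanSpace.single i 1))
        (euclideanBox a b) y (EuclideanSpace.single i 1)| ≤ K)
    {p q : ℝ} (hpq : p < q) (hap : a i ≤ p) (hqb : q ≤ b i)
    (hp : ∀ y ∈ euclideanBox a b, y i = p → φ y = 0)
    (hq : ∀ y ∈ euclideanBox a b, y i = q → φ y = 0)
    {x : EuclideanSpace ℝ ι} (hx : x ∈ euclideanBox a b) (hxi : x i ∈ Icc p q) :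
    |fderivWithin ℝ φ (euclideanBox a b) x (EuclideanSpace.single i 1)| ≤ K * (q - p) := by
  set e : EuclideanSpace ℝ ι := EuclideanSpace.single i 1
  set y := x - x i • e
  have hline : ∀ t, (y + t • e) i = t ∧ ∀ l ≠ i, (y + t • e) l = x l := fun t =>
    ⟨by simp [y, e], fun l hl => by simp [y, e, hl]⟩
  have hmaps : MapsTo (fun t => y + t • e) (Icc p q) (euclideanBox a b) := fun t ht l => by
    by_cases hl : l = i
    · subst hl
      rw [(hline t).1]
      exact ⟨hap.trans ht.1, ht.2.trans hqb⟩
    · rw [(hline t).2 l hl]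
      exact hx l
  have hyx : y + x i • e = x := sub_add_cancel x _
  have hendpoints : φ (y + p • e) = φ (y + q • e) := by
    rw [hp _ (hmaps (left_mem_Icc.2 hpq.le)) (hline p).1,
      hq _ (hmaps (right_mem_Icc.2 hpq.le)) (hline q).1]
  simpa only [hyx] using hφ.abs_fderivWithin_apply_le_of_eq (uniqueDiffOn_euclideanBox hab) hpq
    hmaps (fun t ht => hK _ (hmaps ht)) hendpoints hxi

theorem sq_fderivWithin_single_le_of_eq_zero_on_grid (hab : ∀ i, a i < b i)
    (hφ : ContDiffOn ℝ 2 φ (euclideanBox a b)) (i : ι)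
    (hK : ∀ y ∈ euclideanBox a b, |fderivWithin ℝ
      (fun z => fderivWithin ℝ φ (euclideanBox a b) z (EuclideanSpace.single i 1))
        (euclideanBox a b) y (EuclideanSpace.single i 1)| ≤ K)
    {n : ℕ} {u : Fin n → ℝ} (hu : StrictMono u) {j₀ j₁ : Fin n} (hj₀ : u j₀ = a i)
    (hj₁ : u j₁ = b i) {h : ℝ} (hmesh : ∀ j k : Fin n, (k : ℕ) = j + 1 → u k - u j ≤ h)
    (hzero : ∀ y ∈ euclideanBox a b, ∀ j, y i = u j → φ y = 0)
    {x : EuclideanSpace ℝ ι} (hx : x ∈ euclideanBox a b) :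
    fderivWithin ℝ φ (euclideanBox a b) x (EuclideanSpace.single i 1) ^ 2 ≤
      K ^ 2 * h * (b i - a i) := by
  have hj : j₀ < j₁ := hu.lt_iff_lt.1 (by rw [hj₀, hj₁]; exact hab i)
  obtain ⟨j, k, hjk, hj₀j, hkj₁, hxi⟩ :=
    Fin.exists_consecutive_mem_Icc u j₀ j₁ hj (hj₀ ▸ (hx i).1) (hj₁ ▸ (hx i).2)
  have hpq : u j < u k := hu (Fin.lt_def.2 (by omega))
  have hap : a i ≤ u j := hj₀ ▸ hu.monotone hj₀j
  have hqb : u k ≤ b i := hj₁ ▸ hu.monotone hkj₁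
  have hbound := abs_fderivWithin_single_le_of_eq_zero_on_slices hab hφ i hK hpq hap hqb
    (fun y hy hyj => hzero y hy j hyj) (fun y hy hyk => hzero y hy k hyk) hx hxi
  have hcell : (u k - u j) ^ 2 ≤ h * (b i - a i) := by
    rw [sq]
    exact mul_le_mul (hmesh j k hjk) (by linarith) (sub_pos.2 hpq).le
      ((sub_pos.2 hpq).le.trans (hmesh j k hjk))
  calc _ = |fderivWithin ℝ φ (euclideanBox a b) x (EuclideanSpace.single i 1)| ^ 2 :=
        (sq_abs _).symm
    _ ≤ (K * (u k - u j)) ^ 2 := pow_le_pow_left₀ (abs_nonneg _) hbound 2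
    _ ≤ K ^ 2 * h * (b i - a i) := by
      rw [mul_pow, mul_assoc]
      gcongr

end Box

/-- Deterministic content of Theorem 3 of the paper: if `g` interpolates `f` on all hyperplane
slices through the grid points of a box `X = ∏ [aᵢ, bᵢ]` of mesh at most `h`, and both functions
are twice continuously differentiable with all second-order partial derivatives bounded by `M`,
then `sup_{x ∈ X} ‖∇g(x) − ∇f(x)‖ ≤ 2M (∑ᵢ (bᵢ − aᵢ))^{1/2} √h`. -/
theorem gradient_uniform_rate_on_grid
    (d : ℕ) (a b : Fin d → ℝ) (hab : ∀ i, a i < b i)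
    (X : Set (EuclideanSpace ℝ (Fin d)))
    (hXdef : X = {x : EuclideanSpace ℝ (Fin d) | ∀ i, x i ∈ Icc (a i) (b i)})
    (m : Fin d → ℕ) (hm : ∀ i, 2 ≤ m i)
    (grid : (i : Fin d) → Fin (m i) → ℝ)
    (hmono : ∀ i, StrictMono (grid i))
    (hfirst : ∀ i, grid i ⟨0, by have := hm i; omega⟩ = a i)
    (hlast : ∀ i, grid i ⟨m i - 1, by have := hm i; omega⟩ = b i)
    (h : ℝ)
    (hmesh : ∀ i, ∀ j k : Fin (m i), (k : ℕ) = (j : ℕ) + 1 → grid i k - grid i j ≤ h)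
    (M : ℝ) (hM : 0 < M)
    (f g : EuclideanSpace ℝ (Fin d) → ℝ)
    (hf : ContDiffOn ℝ 2 f X) (hg : ContDiffOn ℝ 2 g X)
    (hfbd : ∀ x ∈ X, ∀ i j : Fin d,
      |fderivWithin ℝ (fun y => fderivWithin ℝ f X y (EuclideanSpace.single i 1)) X x
        (EuclideanSpace.single j 1)| ≤ M)
    (hgbd : ∀ x ∈ X, ∀ i j : Fin d,
      |fderivWithin ℝ (fun y => fderivWithin ℝ g X y (EuclideanSpace.single i 1)) X x
        (EuclideanSpace.single j 1)| ≤ M)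
    (hinterp : ∀ x ∈ X, (∃ i : Fin d, ∃ j : Fin (m i), x i = grid i j) → g x = f x) :
    ∀ x ∈ X,
      Real.sqrt (∑ i : Fin d,
          (fderivWithin ℝ g X x (EuclideanSpace.single i 1)
            - fderivWithin ℝ f X x (EuclideanSpace.single i 1)) ^ 2)
        ≤ 2 * M * Real.sqrt (∑ i : Fin d, (b i - a i)) * Real.sqrt h := by
  intro x hx
  change X = euclideanBox a b at hXdef
  subst hXdef
  have hX := uniqueDiffOn_euclideanBox hab
  have hcoord : ∀ i, (fderivWithin ℝ g (euclideanBox a b) x (EuclideanSpace.single i 1)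
      - fderivWithin ℝ f (euclideanBox a b) x (EuclideanSpace.single i 1)) ^ 2
        ≤ (2 * M) ^ 2 * h * (b i - a i) := by
    intro i
    rw [← sub_apply, ← fderivWithin_fun_sub (hX x hx)
      (hg.differentiableOn two_ne_zero x hx) (hf.differentiableOn two_ne_zero x hx)]
    refine sq_fderivWithin_single_le_of_eq_zero_on_grid hab (hg.sub hf) i (fun y hy => ?_)
      (hmono i) (hfirst i) (hlast i) (hmesh i)
      (fun y hy j hyj => sub_eq_zero.2 (hinterp y hy ⟨i, j, hyj⟩)) hx
    rw [fderivWithin_fderivWithin_apply_sub hX hf hg hy, two_mul]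
    exact (abs_sub _ _).trans (add_le_add (hgbd y hy i i) (hfbd y hy i i))
  have hS : 0 ≤ ∑ i, (b i - a i) := Finset.sum_nonneg fun i _ => (sub_pos.2 (hab i)).le
  calc _ ≤ Real.sqrt (∑ i, (2 * M) ^ 2 * h * (b i - a i)) :=
        Real.sqrt_le_sqrt (Finset.sum_le_sum fun i _ => hcoord i)
    _ = 2 * M * Real.sqrt (∑ i, (b i - a i)) * Real.sqrt h := by
      rw [← Finset.mul_sum, Real.sqrt_mul' _ hS, Real.sqrt_mul (sq_nonneg _),
        Real.sqrt_sq (by positivity)]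
      ring
end
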